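/- Let u, w be elements of the Weyl group of a Kac–Moody algebra with w = u s_α, u < w (Bruhat order, ℓ(w) = ℓ(u)+1), α a positive real root, and let β be a positive root with s_α β a negative root. Then ⟨β, α^∨⟩ > 0 and uβ = wβ − ⟨β, α^∨⟩ wα is a positive root whenever wβ is positive and wα is negative. -/

import Mathlib

/-!
Everything follows from positivity of roots that are nonnegative combinations of positive
roots: if `⟨β, α^∨⟩ ≤ 0`, then `s_α β = β + (-⟨β, α^∨⟩) α` would be positive; and since
`u = w s_α`, `u β = w β + ⟨β, α^∨⟩ (-w α)` with `w β` and `-w α` positive.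
-/

/-- Abstract data of a (Kac–Moody) root system together with its Weyl group action,
positive/negative roots, reflections in (real) roots, coroot pairing and length function,
with the standard properties used in the paper. -/
structure RootData (W : Type) (V : Type) [Group W] [AddCommGroup V] [Module ℝ V] where
  /-- the linear action of the Weyl group -/
  act : W →* (V ≃ₗ[ℝ] V)
  /-- the set of roots -/
  roots : Set V
  /-- the set of positive roots Δ⁺ -/
  pos : Set V
  pos_subset : pos ⊆ roots
  /-- Δ = Δ⁺ ∪ Δ⁻ with Δ⁻ = −Δ⁺ -/
  roots_eq : roots = pos ∪ (-pos)
  disj : Disjoint pos (-pos)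
  stable : ∀ w : W, ∀ α ∈ roots, act w α ∈ roots
  /-- pair λ α = ⟨λ, α^∨⟩ -/
  pair : V → V → ℝ
  /-- the reflection s_α in a root α -/
  refl : V → W
  refl_apply : ∀ α ∈ roots, ∀ lam : V, act (refl α) lam = lam - pair lam α • α
  refl_mul_self : ∀ α ∈ roots, refl α * refl α = 1
  /-- the length function ℓ -/
  len : W → ℕ
  /-- standard: ℓ(w s_α) < ℓ(w) ↔ wα < 0, for a positive real root α -/
  length_lt_iff : ∀ w : W, ∀ α ∈ pos, (len (w * refl α) < len w ↔ act w α ∈ -pos)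
  /-- a root which is a nonnegative combination of positive roots is positive -/
  pos_of_add : ∀ γ ∈ roots, ∀ a b : V, ∀ c : ℝ,
    a ∈ pos → b ∈ pos → 0 ≤ c → γ = a + c • b → γ ∈ pos

/-- Φ(w) = Δ⁺ ∩ wΔ⁻. -/
def RootData.Phi {W V : Type} [Group W] [AddCommGroup V] [Module ℝ V]
    (D : RootData W V) (w : W) : Set V :=
  {β | β ∈ D.pos ∧ D.act w⁻¹ β ∈ -D.pos}

namespace RootData

variable {W V : Type} [Group W] [AddCommGroup V] [Module ℝ V] (D : RootData W V)

theorem sub_smul_mem_pos {a b : V} {c : ℝ} (ha : a ∈ D.pos) (hb : b ∈ -D.pos) (hc : 0 ≤ c)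
    (hroot : a - c • b ∈ D.roots) : a - c • b ∈ D.pos :=
  D.pos_of_add _ hroot a (-b) c ha hb hc (by rw [smul_neg, sub_eq_add_neg])

theorem act_refl_mem_pos_of_pair_nonpos {α β : V} (hα : α ∈ D.pos) (hβ : β ∈ D.pos)
    (hpair : D.pair β α ≤ 0) : D.act (D.refl α) β ∈ D.pos := by
  have hroot : D.act (D.refl α) β ∈ D.roots := D.stable _ β (D.pos_subset hβ)
  rw [D.refl_apply α (D.pos_subset hα), ← neg_smul_neg] at hroot ⊢
  exact D.sub_smul_mem_pos hβ (Set.neg_mem_neg.mpr hα) (neg_nonneg.mpr hpair) hroot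

theorem pair_pos_of_act_refl_mem_neg {α β : V} (hα : α ∈ D.pos) (hβ : β ∈ D.pos)
    (hsβ : D.act (D.refl α) β ∈ -D.pos) : 0 < D.pair β α := by
  by_contra! hpair
  exact D.disj.ne_of_mem (D.act_refl_mem_pos_of_pair_nonpos hα hβ hpair) hsβ rfl

theorem mul_refl_mul_refl {α : V} (hα : α ∈ D.roots) (w : W) :
    w * D.refl α * D.refl α = w := by
  rw [mul_assoc, D.refl_mul_self α hα, mul_one]

theorem act_mul_refl_apply {α : V} (hα : α ∈ D.roots) (w : W) (β : V) :
    D.act (w * D.refl α) β = D.act w β - D.pair β α • D.act w α := by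
  rw [map_mul, LinearEquiv.mul_apply, D.refl_apply α hα, map_sub, map_smul]

end RootData

theorem case_I_of_lemma_general
    {W V : Type} [Group W] [AddCommGroup V] [Module ℝ V]
    (D : RootData W V) (u w : W) (α β : V)
    (hα : α ∈ D.pos)
    (hw : w = u * D.refl α)
    (hβ : β ∈ D.pos)
    (hsβ : D.act (D.refl α) β ∈ -D.pos)
    (hwβ : D.act w β ∈ D.pos)
    (hwα : D.act w α ∈ -D.pos) :
    0 < D.pair β α ∧
    D.act u β = D.act w β - D.pair β α • D.act w α ∧
    D.act u β ∈ D.pos := by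
  have hαr : α ∈ D.roots := D.pos_subset hα
  have hpair : 0 < D.pair β α := D.pair_pos_of_act_refl_mem_neg hα hβ hsβ
  have huβ : D.act u β = D.act w β - D.pair β α • D.act w α := by
    rw [← D.mul_refl_mul_refl hαr u, ← hw, D.act_mul_refl_apply hαr]
  refine ⟨hpair, huβ, ?_⟩
  have hroot : D.act u β ∈ D.roots := D.stable u β (D.pos_subset hβ)
  rw [huβ] at hroot ⊢
  exact D.sub_smul_mem_pos hwβ hwα hpair.le hroot

/-- Case I of Lemma 2.4: let w = u s_α, u < w (ℓ(w) = ℓ(u)+1), α a positive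
real root, and β a positive root with s_α β negative. Then ⟨β, α^∨⟩ > 0 and
uβ = wβ − ⟨β, α^∨⟩ wα is a positive root, given that wβ is positive and wα is negative. -/
theorem case_I_of_lemma
    {W V : Type} [Group W] [AddCommGroup V] [Module ℝ V]
    (D : RootData W V) (u w : W) (α β : V)
    (hα : α ∈ D.pos)
    (hw : w = u * D.refl α)
    (hlen : D.len w = D.len u + 1)
    (hβ : β ∈ D.pos)
    (hsβ : D.act (D.refl α) β ∈ -D.pos)
    (hwβ : D.act w β ∈ D.pos)
    (hwα : D.act w α ∈ -D.pos) :
    0 < D.pair β α ∧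
    D.act u β = D.act w β - D.pair β α • D.act w α ∧
    D.act u β ∈ D.pos :=
  case_I_of_lemma_general D u w α β hα hw hβ hsβ hwβ hwα
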